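/- arXiv:2209.03637 — 4 statements merged into one kernel-verified Lean document; each statement's English description precedes it below -/
import Mathlib

section
/- Let T ∈ ℝ with T < 0 and let c : (T, ∞) → (0, ∞) be a positive measurable function such that t ↦ c(t)e^{-t} is decreasing on (T, ∞) and ∫_{T₁}^{∞} c(t)e^{-t} dt < ∞ for some T₁ > T. Then there exists a positive measurable function c̃ on (T, ∞) satisfying: (1) c̃ ≥ c on (T, ∞); (2) t ↦ c̃(t)e^{-t} is strictly decreasing on (T, ∞) and c̃ is increasing on (a, ∞) for some a > T; (3) ∫_{T₁}^{∞} c̃(t)e^{-t} dt < ∞. -/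
/-!
Let `B` be the running supremum of `c` from `T₁`. Since `c t * exp (-t)` decreases, `c` grows at
most like `exp`, so `B t * exp (-t)` still decreases; splitting `[T₁, t]` at its midpoint `m`
bounds it by `(c T₁ + c m) * exp (-m)`, which is integrable in `t` because `c * exp (-·)` is.
Then `c' = max c B + exp (· / 2)` works: `B` makes it increasing from `T₁` on, and the last
summand makes `c' t * exp (-t)` strictly decreasing at the cost of the integrable `exp (-t / 2)`.
-/

open MeasureTheory Set Real

theorem IntegrableOn.comp_midpoint_Ioi {g : ℝ → ℝ} {a : ℝ} (hg : IntegrableOn g (Ioi a)) :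
    IntegrableOn (fun t => g ((a + t) / 2)) (Ioi a) := by
  have hderiv : ∀ t ∈ Ioi a, HasDerivWithinAt (fun t => (a + t) / 2) (1 / 2) (Ioi a) t :=
    fun t _ => (((hasDerivAt_id t).const_add a).div_const 2).hasDerivWithinAt.congr_deriv
      (by norm_num)
  have hmono : MonotoneOn (fun t : ℝ => (a + t) / 2) (Ioi a) :=
    fun x _ y _ hxy => by dsimp only; linarith
  have himage : (fun t : ℝ => (a + t) / 2) '' Ioi a ⊆ Ioi a := by
    rintro _ ⟨t, ht, rfl⟩
    exact show a < (a + t) / 2 by linarith [mem_Ioi.1 ht]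
  have := ((integrableOn_image_iff_integrableOn_deriv_smul_of_monotoneOn measurableSet_Ioi
    hderiv hmono g).1 (hg.mono_set himage)).const_mul 2
  simp only [smul_eq_mul, ← mul_assoc] at this
  norm_num at this
  exact this

section WeightedDecreasing

variable {c : ℝ → ℝ} {a : ℝ}

theorem le_mul_exp_sub_of_antitoneOn {s : Set ℝ} (hc : AntitoneOn (fun t => c t * exp (-t)) s)
    {x y : ℝ} (hx : x ∈ s) (hy : y ∈ s) (hxy : x ≤ y) : c y ≤ c x * exp (y - x) := by
  have h := mul_le_mul_of_nonneg_right (hc hx hy hxy) (exp_pos y).le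
  rwa [mul_assoc, ← exp_add, neg_add_cancel, exp_zero, mul_one, mul_assoc, ← exp_add,
    neg_add_eq_sub] at h

/-- On each half of `[a, t]`, `c` grows from its value at the left end by at most
`exp ((t - a) / 2)`. -/
theorem le_add_mul_exp_half_of_antitoneOn (hc : AntitoneOn (fun t => c t * exp (-t)) (Ici a))
    (hc₀ : ∀ t ∈ Ici a, 0 ≤ c t) {s t : ℝ} (hs : s ∈ Icc a t) :
    c s ≤ (c a + c ((a + t) / 2)) * exp ((t - a) / 2) := by
  have ha : a ∈ Ici a := mem_Ici.2 le_rfl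
  have hm : (a + t) / 2 ∈ Ici a := show a ≤ (a + t) / 2 by linarith [hs.1.trans hs.2]
  have hs' : s ∈ Ici a := hs.1
  have hca := hc₀ a ha
  have hcm := hc₀ _ hm
  rcases le_total s ((a + t) / 2) with hsm | hms
  · calc c s ≤ c a * exp (s - a) := le_mul_exp_sub_of_antitoneOn hc ha hs' hs.1
      _ ≤ c a * exp ((t - a) / 2) := by gcongr; linarith
      _ ≤ _ := by gcongr; linarith
  · calc c s ≤ c ((a + t) / 2) * exp (s - (a + t) / 2) :=
          le_mul_exp_sub_of_antitoneOn hc hm hs' hms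
      _ ≤ c ((a + t) / 2) * exp ((t - a) / 2) := by gcongr; linarith [hs.2]
      _ ≤ _ := by gcongr; linarith

end WeightedDecreasing

/-- The supremum of `c` over `[a, t]`; for `t ≤ a` it is `c a`. -/
noncomputable def runningSup (c : ℝ → ℝ) (a t : ℝ) : ℝ := sSup (c '' Icc a (max a t))

section RunningSup

variable {c : ℝ → ℝ} {a : ℝ}

theorem le_runningSup (hc : AntitoneOn (fun t => c t * exp (-t)) (Ici a))
    (hc₀ : ∀ t ∈ Ici a, 0 ≤ c t) {s t : ℝ} (hs : s ∈ Icc a (max a t)) :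
    c s ≤ runningSup c a t :=
  le_csSup ⟨_, by rintro _ ⟨u, hu, rfl⟩; exact le_add_mul_exp_half_of_antitoneOn hc hc₀ hu⟩
    ⟨s, hs, rfl⟩

theorem runningSup_le {t x : ℝ} (h : ∀ s ∈ Icc a (max a t), c s ≤ x) : runningSup c a t ≤ x :=
  csSup_le ⟨c a, a, ⟨le_rfl, le_max_left a t⟩, rfl⟩ (by rintro _ ⟨s, hs, rfl⟩; exact h s hs)

theorem runningSup_nonneg (hc : AntitoneOn (fun t => c t * exp (-t)) (Ici a))
    (hc₀ : ∀ t ∈ Ici a, 0 ≤ c t) (t : ℝ) : 0 ≤ runningSup c a t :=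
  (hc₀ a (mem_Ici.2 le_rfl)).trans (le_runningSup hc hc₀ ⟨le_rfl, le_max_left a t⟩)

theorem monotone_runningSup (hc : AntitoneOn (fun t => c t * exp (-t)) (Ici a))
    (hc₀ : ∀ t ∈ Ici a, 0 ≤ c t) : Monotone (runningSup c a) := fun _ _ htt' =>
  runningSup_le fun _ hs =>
    le_runningSup hc hc₀ (Icc_subset_Icc_right (max_le_max le_rfl htt') hs)

theorem runningSup_le_mul_exp_sub (hc : AntitoneOn (fun t => c t * exp (-t)) (Ici a))
    (hc₀ : ∀ t ∈ Ici a, 0 ≤ c t) {t t' : ℝ} (htt' : t ≤ t') :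
    runningSup c a t' ≤ runningSup c a t * exp (t' - t) := by
  have hB := runningSup_nonneg hc hc₀ t
  refine runningSup_le fun s hs => ?_
  rcases le_or_gt s (max a t) with hst | hts
  · calc c s ≤ runningSup c a t := le_runningSup hc hc₀ ⟨hs.1, hst⟩
      _ ≤ runningSup c a t * exp (t' - t) :=
          le_mul_of_one_le_right hB (one_le_exp (sub_nonneg.2 htt'))
  · have hst' : s ≤ t' :=
      (le_max_iff.1 hs.2).resolve_left (not_le.2 ((le_max_left a t).trans_lt hts))
    calc c s ≤ c (max a t) * exp (s - max a t) :=
          le_mul_exp_sub_of_antitoneOn hc (le_max_left a t) hs.1 hts.le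
      _ ≤ runningSup c a t * exp (t' - t) := by
          gcongr
          · exact le_runningSup hc hc₀ ⟨le_max_left a t, le_rfl⟩
          · linarith [le_max_right a t]

theorem antitone_runningSup_mul_exp_neg (hc : AntitoneOn (fun t => c t * exp (-t)) (Ici a))
    (hc₀ : ∀ t ∈ Ici a, 0 ≤ c t) : Antitone fun t => runningSup c a t * exp (-t) :=
  fun t t' htt' => calc
    runningSup c a t' * exp (-t') ≤ runningSup c a t * exp (t' - t) * exp (-t') := by
      gcongr; exact runningSup_le_mul_exp_sub hc hc₀ htt'
    _ = runningSup c a t * exp (-t) := by rw [mul_assoc, ← exp_add]; ring_nf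

theorem runningSup_mul_exp_neg_le (hc : AntitoneOn (fun t => c t * exp (-t)) (Ici a))
    (hc₀ : ∀ t ∈ Ici a, 0 ≤ c t) {t : ℝ} (ht : a ≤ t) :
    runningSup c a t * exp (-t) ≤ (c a + c ((a + t) / 2)) * exp (-((a + t) / 2)) := calc
  runningSup c a t * exp (-t) ≤ (c a + c ((a + t) / 2)) * exp ((t - a) / 2) * exp (-t) := by
      gcongr
      exact runningSup_le fun s hs =>
        le_add_mul_exp_half_of_antitoneOn hc hc₀ (by rwa [max_eq_right ht] at hs)
  _ = (c a + c ((a + t) / 2)) * exp (-((a + t) / 2)) := by rw [mul_assoc, ← exp_add]; ring_nf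

theorem integrableOn_runningSup_mul_exp_neg (hc : AntitoneOn (fun t => c t * exp (-t)) (Ici a))
    (hc₀ : ∀ t ∈ Ici a, 0 ≤ c t) (hint : IntegrableOn (fun t => c t * exp (-t)) (Ioi a)) :
    IntegrableOn (fun t => runningSup c a t * exp (-t)) (Ioi a) := by
  have hmajorant : IntegrableOn (fun u => (c a + c u) * exp (-u)) (Ioi a) := by
    exact (((integrableOn_exp_neg_Ioi a).const_mul (c a)).add hint).congr
      (.of_forall fun u => (add_mul _ _ _).symm)
  refine Integrable.mono' (IntegrableOn.comp_midpoint_Ioi hmajorant) ?_ ?_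
  · exact ((monotone_runningSup hc hc₀).measurable.mul (by fun_prop)).aestronglyMeasurable
  · filter_upwards [ae_restrict_mem measurableSet_Ioi] with t ht
    rw [norm_of_nonneg (mul_nonneg (runningSup_nonneg hc hc₀ t) (exp_pos _).le)]
    exact runningSup_mul_exp_neg_le hc hc₀ (le_of_lt ht)

end RunningSup

theorem max_add_exp_half_mul_exp_neg (x y t : ℝ) :
    (max x y + exp (t / 2)) * exp (-t) = max (x * exp (-t)) (y * exp (-t)) + exp (-(t / 2)) := by
  rw [add_mul, max_mul_of_nonneg _ _ (exp_pos _).le, ← exp_add]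
  ring_nf

theorem stmt_1_general (T T₁ : ℝ) (hTT₁ : T < T₁) (c : ℝ → ℝ)
    (hc_meas : Measurable c)
    (hc_pos : ∀ t, T < t → 0 < c t)
    (hc_dec : AntitoneOn (fun t => c t * Real.exp (-t)) (Set.Ioi T))
    (hc_int : IntegrableOn (fun t => c t * Real.exp (-t)) (Set.Ioi T₁)) :
    ∃ c' : ℝ → ℝ, Measurable c' ∧
      (∀ t, T < t → 0 < c' t) ∧
      (∀ t, T < t → c t ≤ c' t) ∧
      StrictAntiOn (fun t => c' t * Real.exp (-t)) (Set.Ioi T) ∧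
      (∃ a : ℝ, T < a ∧ MonotoneOn c' (Set.Ioi a)) ∧
      IntegrableOn (fun t => c' t * Real.exp (-t)) (Set.Ioi T₁) := by
  have hc : AntitoneOn (fun t => c t * exp (-t)) (Ici T₁) := hc_dec.mono (Ici_subset_Ioi.2 hTT₁)
  have hc₀ : ∀ t ∈ Ici T₁, 0 ≤ c t := fun t ht => (hc_pos t (hTT₁.trans_le ht)).le
  have hc_le : ∀ t ∈ Ioi T₁, c t ≤ runningSup c T₁ t := fun t ht =>
    le_runningSup hc hc₀ ⟨le_of_lt ht, le_max_right _ _⟩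
  refine ⟨fun t => max (c t) (runningSup c T₁ t) + exp (t / 2), ?_, fun t ht => ?_,
    fun t _ => ?_, ?_, ⟨T₁, hTT₁, fun t ht t' ht' htt' => ?_⟩, ?_⟩
  · exact (hc_meas.max (monotone_runningSup hc hc₀).measurable).add (by fun_prop)
  · exact ((hc_pos t ht).trans_le (le_max_left _ _)).trans (lt_add_of_pos_right _ (exp_pos _))
  · exact (le_max_left _ _).trans (le_add_of_nonneg_right (exp_pos _).le)
  · simp only [max_add_exp_half_mul_exp_neg]
    refine (hc_dec.sup ((antitone_runningSup_mul_exp_neg hc hc₀).antitoneOn _)).add_strictAnti ?_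
    exact fun x _ y _ hxy => exp_lt_exp.2 (by linarith)
  · simp only [max_eq_right (hc_le t ht), max_eq_right (hc_le t' ht')]
    gcongr
    exact monotone_runningSup hc hc₀ htt'
  · simp only [max_add_exp_half_mul_exp_neg]
    have hexp : IntegrableOn (fun t => exp (-(t / 2))) (Ioi T₁) := by
      simpa [div_eq_inv_mul] using exp_neg_integrableOn_Ioi T₁ (b := 2⁻¹) (by norm_num)
    exact (hc_int.sup (integrableOn_runningSup_mul_exp_neg hc hc₀ hc_int)).add hexp

/-- Given a positive measurable function `c` on `(T, ∞)` with `c t * e^{-t}` decreasing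
and `∫_{T₁}^∞ c t e^{-t} dt < ∞` for some `T₁ > T`, there exists a positive measurable
function `c̃ ≥ c` on `(T, ∞)` such that `c̃ t * e^{-t}` is strictly decreasing on `(T, ∞)`,
`c̃` is increasing on some `(a, ∞)` with `a > T`, and `∫_{T₁}^∞ c̃ t e^{-t} dt < ∞`. -/
theorem stmt_1 (T T₁ : ℝ) (hT : T < 0) (hTT₁ : T < T₁) (c : ℝ → ℝ)
    (hc_meas : Measurable c)
    (hc_pos : ∀ t, T < t → 0 < c t)
    (hc_dec : AntitoneOn (fun t => c t * Real.exp (-t)) (Set.Ioi T))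
    (hc_int : IntegrableOn (fun t => c t * Real.exp (-t)) (Set.Ioi T₁)) :
    ∃ c' : ℝ → ℝ, Measurable c' ∧
      (∀ t, T < t → 0 < c' t) ∧
      (∀ t, T < t → c t ≤ c' t) ∧
      StrictAntiOn (fun t => c' t * Real.exp (-t)) (Set.Ioi T) ∧
      (∃ a : ℝ, T < a ∧ MonotoneOn c' (Set.Ioi a)) ∧
      IntegrableOn (fun t => c' t * Real.exp (-t)) (Set.Ioi T₁) :=
  stmt_1_general T T₁ hTT₁ c hc_meas hc_pos hc_dec hc_int
end

section
/- Let b₁ > 0 and let (aₙ)ₙ≥1 be a decreasing sequence of positive reals with ∑ₙ aₙ < ∞. Define b₁ = a₁ and inductively bₙ = max{bₙ₋₁/e, aₙ} for n > 1. Then bₙ ≥ bₙ₊₁ ≥ bₙ/e and bₙ ≥ aₙ for all n, and ∑ₙ bₙ ≤ (e/(e-1)) ∑ₙ aₙ < ∞. -/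
/-!
Since `aₙ ≥ 0`, the recursion gives `bₙ₊₁ ≤ r bₙ + aₙ₊₁` with `r = 1/e`. Summing this over
`n < N` yields `(1 - r) ∑_{n<N} bₙ ≤ ∑_{n<N} aₙ`, so the partial sums of `b` are bounded by
`(1 - r)⁻¹ ∑ aₙ = e/(e-1) ∑ aₙ`.
-/

open Finset

section LinearRecursiveBound

variable {a b : ℕ → ℝ} {r : ℝ}

theorem one_sub_mul_sum_range_le_of_le_mul_add (hr : 0 ≤ r) (hb : ∀ n, 0 ≤ b n)
    (h0 : b 0 ≤ a 0) (hstep : ∀ n, b (n + 1) ≤ r * b n + a (n + 1)) (N : ℕ) :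
    (1 - r) * ∑ i ∈ range N, b i ≤ ∑ i ∈ range N, a i := by
  cases N with
  | zero => simp
  | succ N =>
    have hshift :
        ∑ i ∈ range N, b (i + 1) ≤ r * ∑ i ∈ range N, b i + ∑ i ∈ range N, a (i + 1) := by
      rw [mul_sum, ← sum_add_distrib]
      exact sum_le_sum fun i _ => hstep i
    have hmono : r * ∑ i ∈ range N, b i ≤ r * ∑ i ∈ range (N + 1), b i :=
      mul_le_mul_of_nonneg_left (sum_le_sum_of_subset_of_nonneg (range_subset_range.2 N.le_succ)
        fun i _ _ => hb i) hr
    rw [sum_range_succ' b] at hmono ⊢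
    rw [sum_range_succ' a]
    linarith

theorem summable_and_tsum_le_of_le_mul_add (hr0 : 0 ≤ r) (hr1 : r < 1) (ha : ∀ n, 0 ≤ a n)
    (ha_sum : Summable a) (hb : ∀ n, 0 ≤ b n) (h0 : b 0 ≤ a 0)
    (hstep : ∀ n, b (n + 1) ≤ r * b n + a (n + 1)) :
    Summable b ∧ ∑' n, b n ≤ (1 - r)⁻¹ * ∑' n, a n := by
  have hpartial (N : ℕ) : ∑ i ∈ range N, b i ≤ (1 - r)⁻¹ * ∑' n, a n := by
    rw [le_inv_mul_iff₀ (sub_pos.2 hr1)]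
    exact (one_sub_mul_sum_range_le_of_le_mul_add hr0 hb h0 hstep N).trans
      (ha_sum.sum_le_tsum _ fun i _ => ha i)
  exact ⟨summable_of_sum_range_le hb hpartial, Real.tsum_le_of_sum_range_le hb hpartial⟩

end LinearRecursiveBound

/-- Let `(aₙ)` be a decreasing sequence of positive reals with `∑ aₙ < ∞`, and define
`b₀ = a₀`, `bₙ₊₁ = max (bₙ / e) aₙ₊₁`. Then `bₙ ≥ bₙ₊₁ ≥ bₙ / e`, `bₙ ≥ aₙ` for all `n`,
`(bₙ)` is summable, and `∑ bₙ ≤ (e/(e-1)) ∑ aₙ`. -/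
theorem stmt_2 (a b : ℕ → ℝ)
    (ha_pos : ∀ n, 0 < a n)
    (ha_dec : ∀ n, a (n + 1) ≤ a n)
    (ha_sum : Summable a)
    (hb0 : b 0 = a 0)
    (hbrec : ∀ n, b (n + 1) = max (b n / Real.exp 1) (a (n + 1))) :
    (∀ n, b (n + 1) ≤ b n ∧ b n / Real.exp 1 ≤ b (n + 1) ∧ a n ≤ b n) ∧
      Summable b ∧
      ∑' n, b n ≤ (Real.exp 1 / (Real.exp 1 - 1)) * ∑' n, a n := by
  have he : 1 < Real.exp 1 := Real.one_lt_exp_iff.2 one_pos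
  have hab (n : ℕ) : a n ≤ b n := by
    cases n with
    | zero => exact hb0.ge
    | succ n => exact hbrec n ▸ le_max_right _ _
  have hb (n : ℕ) : 0 ≤ b n := (ha_pos n).le.trans (hab n)
  have hstep (n : ℕ) : b (n + 1) ≤ (Real.exp 1)⁻¹ * b n + a (n + 1) := by
    rw [hbrec, inv_mul_eq_div]
    exact max_le_add_of_nonneg (div_nonneg (hb n) (by positivity)) (ha_pos _).le
  refine ⟨fun n => ⟨?_, hbrec n ▸ le_max_left _ _, hab n⟩, ?_⟩
  · rw [hbrec]
    exact max_le (div_le_self (hb n) he.le) ((ha_dec n).trans (hab n))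
  · have hconst : (1 - (Real.exp 1)⁻¹)⁻¹ = Real.exp 1 / (Real.exp 1 - 1) := by
      field_simp
    rw [← hconst]
    exact summable_and_tsum_le_of_le_mul_add (by positivity) (inv_lt_one_of_one_lt₀ he)
      (fun n => (ha_pos n).le) ha_sum hb hb0.le hstep
end

section
/- Let S ∈ ℝ, and for l ∈ ℕ⁺ let g_l : ℝ → ℝ be nonnegative smooth functions with supp(g_l) ⊆ [-1/l, 1/l], ∫_{-1/l}^{0} g_l(x) dx = 1, and ∫_{0}^{1/l} g_l(x) dx ≤ 1/l. Let h : (S, ∞) → (0, ∞) be a decreasing function, and define c_l(t) = e^t ∫_ℝ h(e^y (t - S) + S) g_l(y) dy for t > S. Then for every t > S, lim_{l → ∞} c_l(t) = e^t · h⁻(t), where h⁻(t) = lim_{s → t⁻} h(s) is the left limit of h at t. -/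
open MeasureTheory Filter Set

/-- Let `g_l` be nonnegative smooth functions supported in `[-1/l, 1/l]` with
`∫_{-1/l}^0 g_l = 1` and `∫_0^{1/l} g_l ≤ 1/l`, and let `h` be a positive decreasing
function on `(S, ∞)`. Define `c_l(t) = e^t ∫ h(e^y (t - S) + S) g_l(y) dy`. Then for every
`t > S`, `c_l(t) → e^t · h⁻(t)` as `l → ∞`, where `h⁻(t)` is the left limit of `h` at `t`. -/
theorem stmt_3 (S : ℝ) (g : ℕ → ℝ → ℝ)
    (hg_smooth : ∀ l : ℕ, 1 ≤ l → ContDiff ℝ (⊤ : ℕ∞) (g l))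
    (hg_nonneg : ∀ l x, 0 ≤ g l x)
    (hg_supp : ∀ l : ℕ, 1 ≤ l → Function.support (g l) ⊆ Set.Icc (-(1 / (l : ℝ))) (1 / (l : ℝ)))
    (hg_int1 : ∀ l : ℕ, 1 ≤ l → ∫ x in (-(1 / (l : ℝ)))..0, g l x = 1)
    (hg_int2 : ∀ l : ℕ, 1 ≤ l → ∫ x in (0 : ℝ)..(1 / (l : ℝ)), g l x ≤ 1 / (l : ℝ))
    (h : ℝ → ℝ)
    (hh_pos : ∀ t, S < t → 0 < h t)
    (hh_anti : AntitoneOn h (Set.Ioi S))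
    (t : ℝ) (ht : S < t) (hm : ℝ)
    (hleft : Tendsto h (nhdsWithin t (Set.Iio t)) (nhds hm)) :
    Tendsto (fun l : ℕ => Real.exp t * ∫ y : ℝ, h (Real.exp y * (t - S) + S) * g l y)
      atTop (nhds (Real.exp t * hm)) := by
  have ht' : 0 < t - S := sub_pos.2 ht
  set φ : ℝ → ℝ := fun y => Real.exp y * (t - S) + S with hφdef
  have hφS : ∀ y, S < φ y := fun y => by
    have : 0 < Real.exp y * (t - S) := mul_pos (Real.exp_pos y) ht'
    simp [φ]; linarith
  have hφmono : StrictMono φ := fun y z hyz => by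
    have := Real.exp_lt_exp.2 hyz
    have : Real.exp y * (t - S) < Real.exp z * (t - S) := by
      exact mul_lt_mul_of_pos_right this ht'
    simpa [φ] using this
  have hφ0 : φ 0 = t := by simp [φ]
  have hφcont : Continuous φ := by
    exact (Real.continuous_exp.mul continuous_const).add continuous_const
  have hcomp_anti : Antitone (fun y => h (φ y)) := fun y z hyz =>
    hh_anti (mem_Ioi.2 (hφS y)) (mem_Ioi.2 (hφS z)) (hφmono.monotone hyz)
  have hcomp_meas : Measurable (fun y => h (φ y)) := hcomp_anti.measurable
  have hcomp_pos : ∀ y, 0 < h (φ y) := fun y => hh_pos _ (hφS y)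
  -- hm is a lower bound for h on (S, t)
  have hm_le : ∀ s, S < s → s < t → hm ≤ h s := by
    intro s hSs hst
    refine le_of_tendsto hleft ?_
    filter_upwards [Ioo_mem_nhdsLT hst] with x hx
    exact hh_anti (mem_Ioi.2 hSs) (mem_Ioi.2 (hSs.trans hx.1)) hx.1.le
  set f : ℕ → ℝ → ℝ := fun l y => h (φ y) * g l y with hfdef
  set I : ℕ → ℝ := fun l => ∫ y : ℝ, f l y with hIdef
  -- main bounds for l ≥ 1
  have key : ∀ l : ℕ, 1 ≤ l →
      hm ≤ I l ∧ I l ≤ h (φ (-(1 / (l : ℝ)))) + h t * (1 / (l : ℝ)) := by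
    intro l hl
    set a : ℝ := 1 / (l : ℝ) with hadef
    have ha : 0 < a := by positivity
    have hgc : Continuous (g l) := (hg_smooth l hl).continuous
    have hgint : Integrable (g l) := by
      refine hgc.integrable_of_hasCompactSupport ?_
      exact HasCompactSupport.intro isCompact_Icc fun x hx =>
        by_contra fun hne => hx (hg_supp l hl hne)
    set C : ℝ := h (φ (-a)) with hCdef
    have hC : 0 < C := hcomp_pos _
    have hle_C : ∀ y ∈ Icc (-a) a, h (φ y) ≤ C :=
      fun y hy => hcomp_anti hy.1
    have hf_meas : AEStronglyMeasurable (f l) volume :=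
      (hcomp_meas.mul hgc.measurable).aestronglyMeasurable
    have hf_nonneg : ∀ y, 0 ≤ f l y := fun y =>
      mul_nonneg (hcomp_pos y).le (hg_nonneg l y)
    have hf_bound : ∀ y, ‖f l y‖ ≤ C * g l y := by
      intro y
      rw [Real.norm_eq_abs, abs_of_nonneg (hf_nonneg y)]
      by_cases hy : g l y = 0
      · simp [f, hy]
      · exact mul_le_mul_of_nonneg_right (hle_C y (hg_supp l hl hy)) (hg_nonneg l y)
    have hf_int : Integrable (f l) :=
      (hgint.const_mul C).mono' hf_meas (ae_of_all _ hf_bound)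
    -- split the integral
    have hsplit : I l = (∫ y in Icc (-a) 0, f l y) + ∫ y in Ioc 0 a, f l y := by
      have h1 : I l = ∫ y in Icc (-a) a, f l y := by
        refine (setIntegral_eq_integral_of_forall_compl_eq_zero fun y hy => ?_).symm
        have : g l y = 0 := by
          by_contra hne; exact hy (hg_supp l hl hne)
        simp [f, this]
      rw [h1, ← Icc_union_Ioc_eq_Icc (by linarith : -a ≤ 0) ha.le,
        setIntegral_union (Set.disjoint_left.2 fun x hx hx' => absurd hx'.1 (not_lt.2 hx.2)) measurableSet_Ioc
          hf_int.integrableOn hf_int.integrableOn]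
    -- interval integrals as set integrals
    have hgI1 : ∫ y in Icc (-a) 0, g l y = 1 := by
      rw [integral_Icc_eq_integral_Ioc, ← intervalIntegral.integral_of_le (by linarith : -a ≤ 0)]
      exact hg_int1 l hl
    have hgI2 : ∫ y in Ioc 0 a, g l y ≤ a := by
      rw [← intervalIntegral.integral_of_le ha.le]
      exact hg_int2 l hl
    constructor
    · -- lower bound
      have hL : hm ≤ ∫ y in Icc (-a) 0, f l y := by
        rw [integral_Icc_eq_integral_Ico]
        have : ∫ y in Ico (-a) 0, hm * g l y ≤ ∫ y in Ico (-a) 0, f l y := by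
          refine setIntegral_mono_on ((hgint.const_mul hm).integrableOn)
            hf_int.integrableOn measurableSet_Ico ?_
          intro y hy
          have h1 : φ y < t := by rw [← hφ0]; exact hφmono hy.2
          exact mul_le_mul_of_nonneg_right (hm_le _ (hφS y) h1) (hg_nonneg l y)
        calc hm = hm * ∫ y in Ico (-a) 0, g l y := by
                  rw [integral_Icc_eq_integral_Ico] at hgI1; rw [hgI1, mul_one]
          _ = ∫ y in Ico (-a) 0, hm * g l y := (integral_const_mul _ _).symm
          _ ≤ _ := this
      have hR : 0 ≤ ∫ y in Ioc 0 a, f l y :=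
        setIntegral_nonneg measurableSet_Ioc fun y _ => hf_nonneg y
      rw [hsplit]; linarith
    · -- upper bound
      have hL : ∫ y in Icc (-a) 0, f l y ≤ C := by
        have : ∫ y in Icc (-a) 0, f l y ≤ ∫ y in Icc (-a) 0, C * g l y := by
          refine setIntegral_mono_on hf_int.integrableOn
            ((hgint.const_mul C).integrableOn) measurableSet_Icc ?_
          intro y hy
          exact mul_le_mul_of_nonneg_right
            (hle_C y ⟨hy.1, hy.2.trans ha.le⟩) (hg_nonneg l y)
        calc ∫ y in Icc (-a) 0, f l y ≤ ∫ y in Icc (-a) 0, C * g l y := this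
          _ = C * ∫ y in Icc (-a) 0, g l y := integral_const_mul _ _
          _ = C := by rw [hgI1, mul_one]
      have hR : ∫ y in Ioc 0 a, f l y ≤ h t * a := by
        have h1 : ∫ y in Ioc 0 a, f l y ≤ ∫ y in Ioc 0 a, h t * g l y := by
          refine setIntegral_mono_on hf_int.integrableOn
            ((hgint.const_mul (h t)).integrableOn) measurableSet_Ioc ?_
          intro y hy
          have : t ≤ φ y := by rw [← hφ0]; exact (hφmono.monotone hy.1.le)
          exact mul_le_mul_of_nonneg_right
            (hh_anti (mem_Ioi.2 ht) (mem_Ioi.2 (hφS y)) this) (hg_nonneg l y)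
        calc ∫ y in Ioc 0 a, f l y ≤ ∫ y in Ioc 0 a, h t * g l y := h1
          _ = h t * ∫ y in Ioc 0 a, g l y := integral_const_mul _ _
          _ ≤ h t * a := mul_le_mul_of_nonneg_left hgI2 (hh_pos t ht).le
      rw [hsplit]; linarith
  -- the upper bound tends to hm
  have htendU : Tendsto (fun l : ℕ => h (φ (-(1 / (l : ℝ)))) + h t * (1 / (l : ℝ)))
      atTop (nhds (hm + h t * 0)) := by
    refine Tendsto.add ?_ (tendsto_const_nhds.mul tendsto_one_div_atTop_nhds_zero_nat)
    refine hleft.comp ?_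
    refine tendsto_nhdsWithin_of_tendsto_nhds_of_eventually_within _ ?_ ?_
    · have h0 : Tendsto (fun l : ℕ => -(1 / (l : ℝ))) atTop (nhds 0) := by
        simpa using (tendsto_one_div_atTop_nhds_zero_nat (𝕜 := ℝ)).neg
      have := (hφcont.tendsto 0).comp h0
      rwa [hφ0] at this
    · filter_upwards [eventually_ge_atTop 1] with l hl
      have ha : (0:ℝ) < 1 / (l:ℝ) := by positivity
      have : φ (-(1 / (l:ℝ))) < φ 0 := hφmono (by linarith)
      rw [hφ0] at this
      exact this
  rw [mul_zero, add_zero] at htendU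
  have hI_tend : Tendsto I atTop (nhds hm) := by
    refine tendsto_of_tendsto_of_tendsto_of_le_of_le' tendsto_const_nhds htendU ?_ ?_
    · filter_upwards [eventually_ge_atTop 1] with l hl using (key l hl).1
    · filter_upwards [eventually_ge_atTop 1] with l hl using (key l hl).2
  have := hI_tend.const_mul (Real.exp t)
  simpa [hIdef, hfdef, hφdef] using this
end

section
/- Let S ∈ ℝ and let c : (S, ∞) → (0, ∞) be measurable with t ↦ c(t)e^{-t} decreasing on (S, ∞). Define, for t > S, u(t) = -log(∫_S^t c(t₁)e^{-t₁} dt₁) and s(t) = (∫_S^t (∫_S^{t₂} c(t₁)e^{-t₁} dt₁) dt₂) / (∫_S^t c(t₁)e^{-t₁} dt₁), assuming ∫_S^t c(t₁)e^{-t₁}dt₁ ∈ (0, ∞) for all t > S. Then for all t > S: (1) s(t) > 0 and s'(t) > 0; (2) s'(t) - s(t)u'(t) = 1; (3) (s(t) + s'(t)²/(u''(t)s(t) - s''(t))) e^{u(t) - t} = 1/c(t) wherever c is continuous and the derivatives exist; in particular s + s'²/(u''s - s'') = e^{t - u(t)}/c(t). -/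
/-!
Write `f(t) = c(t) e^{-t}`, `I(t) = ∫_S^t f` and `J(t) = ∫_S^t I`. Where `c` is continuous,
`I' = f` and `J' = I`, so `u' = -f/I` and `s' = 1 - J f/I² = 1 + s u'`. Since `f` is decreasing,
`I(t) - I(x) ≥ (t - x) f(t)`, which yields `J(t) < (t - S) I(t)` and `(t - S) f(t) ≤ I(t)`,
hence `J f < I²`, i.e. `s' > 0`. Differentiating `s' = 1 + s u'` gives `u'' s - s'' = -s' u'`,
so `s + s'²/(u'' s - s'') = -1/u' = I/f = e^{t - u}/c`.

That last differentiation is legitimate although `s' = 1 + s u'` is only known where `c` is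
continuous: a monotone `f` is continuous off a countable set, and two functions that agree off a
countable set and are differentiable at a point have the same derivative there.
-/

open MeasureTheory Set Filter Topology

theorem HasDerivAt.unique_of_eventuallyEq_off_countable {F : Type*} [NormedAddCommGroup F]
    [NormedSpace ℝ F] {g h : ℝ → F} {d e : F} {t : ℝ} {D : Set ℝ} (hD : D.Countable)
    (htD : t ∉ D) (hg : HasDerivAt g d t) (hh : HasDerivAt h e t)
    (hgh : ∀ᶠ x in 𝓝 t, x ∉ D → g x = h x) : d = e := by
  have hU : UniqueDiffWithinAt ℝ Dᶜ t :=
    uniqueDiffWithinAt_univ.mono_closure (hD.dense_compl ℝ).closure_eq.ge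
  refine hU.eq_deriv _ hg.hasDerivWithinAt
    (hh.hasDerivWithinAt.congr_of_eventuallyEq ?_ (hgh.self_of_nhds htD))
  filter_upwards [nhdsWithin_le_nhds hgh, self_mem_nhdsWithin] with x hx hxD using hx hxD

theorem hasDerivAt_neg_log_and_div {I J : ℝ → ℝ} {a t : ℝ} (hI : HasDerivAt I a t)
    (hJ : HasDerivAt J (I t) t) (hIt : I t ≠ 0) :
    HasDerivAt (fun x => -Real.log (I x)) (-(a / I t)) t ∧
      HasDerivAt (fun x => J x / I x) (1 + J t / I t * -(a / I t)) t := by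
  refine ⟨(hI.log hIt).neg, ?_⟩
  refine (hJ.div hI hIt).congr_deriv ?_
  field_simp
  ring

theorem AntitoneOn.countable_not_continuousAt {f : ℝ → ℝ} {s : Set ℝ} (hf : AntitoneOn f s)
    (hs : IsOpen s) : {x ∈ s | ¬ContinuousAt f x}.Countable :=
  hf.countable_not_continuousWithinAt.mono fun _ hx =>
    mem_sep hx.1 fun h => hx.2 (h.continuousAt (hs.mem_nhds hx.1))

theorem eq_mul_add_mul_of_deriv_eq_off_discontinuities {f s u : ℝ → ℝ}
    {S t k s1 u1 s2 u2 : ℝ} (hf : AntitoneOn f (Ioi S)) (ht : S < t) (hft : ContinuousAt f t)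
    (hrel : ∀ x, S < x → ContinuousAt f x → deriv s x = k + s x * deriv u x)
    (hs1 : HasDerivAt s s1 t) (hu1 : HasDerivAt u u1 t) (hs2 : HasDerivAt (deriv s) s2 t)
    (hu2 : HasDerivAt (deriv u) u2 t) : s2 = s1 * u1 + s t * u2 := by
  rw [← hu1.deriv]
  refine hs2.unique_of_eventuallyEq_off_countable (hf.countable_not_continuousAt isOpen_Ioi)
    (fun h => h.2 hft) ((hs1.mul hu2).const_add k) ?_
  filter_upwards [Ioi_mem_nhds ht] with x hx hxD
  exact hrel x hx (not_not.1 fun h => hxD ⟨hx, h⟩)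

theorem mul_le_intervalIntegral_of_antitoneOn {f : ℝ → ℝ} {x y : ℝ} (hxy : x ≤ y)
    (hf : AntitoneOn f (Ioc x y)) (hint : IntervalIntegrable f volume x y) :
    (y - x) * f y ≤ ∫ s in x..y, f s := by
  rw [← smul_eq_mul, ← intervalIntegral.integral_const]
  exact intervalIntegral.integral_mono_on_of_le_Ioo hxy intervalIntegrable_const hint
    fun s hs => hf ⟨hs.1, hs.2.le⟩ (right_mem_Ioc.2 (hs.1.trans hs.2)) hs.2.le

section Primitive

variable {f : ℝ → ℝ} {S : ℝ}

theorem intervalIntegrable_of_forall_integrableOn_Ioc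
    (hf : ∀ t, S < t → IntegrableOn f (Ioc S t)) {x y : ℝ} (hx : S ≤ x) (hy : S ≤ y) :
    IntervalIntegrable f volume x y := by
  have hfrom : ∀ z, S ≤ z → IntervalIntegrable f volume S z := by
    intro z hz
    rcases hz.eq_or_lt with rfl | hz
    · exact .refl
    · exact (intervalIntegrable_iff_integrableOn_Ioc_of_le hz.le).2 (hf z hz)
  exact (hfrom x hx).symm.trans (hfrom y hy)

theorem continuousOn_primitive_Ici (hf : ∀ t, S < t → IntegrableOn f (Ioc S t)) :
    ContinuousOn (fun t => ∫ s in S..t, f s) (Ici S) := by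
  intro x hx
  have hSx : S ≤ x + 1 := by linarith [mem_Ici.1 hx]
  have hcont := intervalIntegral.continuousOn_primitive_interval'
    (intervalIntegrable_of_forall_integrableOn_Ioc hf le_rfl hSx) left_mem_uIcc
  rw [uIcc_of_le hSx] at hcont
  refine (hcont x ⟨hx, by linarith⟩).mono_of_mem_nhdsWithin ?_
  rw [← Ici_inter_Iic]
  exact inter_mem_nhdsWithin _ (Iic_mem_nhds (lt_add_one x))

theorem hasDerivAt_primitive (hf : ∀ t, S < t → IntegrableOn f (Ioc S t)) {x : ℝ}
    (hx : S < x) (hfx : ContinuousAt f x) :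
    HasDerivAt (fun t => ∫ s in S..t, f s) (f x) x :=
  intervalIntegral.integral_hasDerivAt_right
    (intervalIntegrable_of_forall_integrableOn_Ioc hf le_rfl hx.le)
    (AEStronglyMeasurable.stronglyMeasurableAtFilter_of_mem
      (hf (x + 1) (by linarith)).aestronglyMeasurable (Ioc_mem_nhds hx (lt_add_one x))) hfx

theorem intervalIntegrable_primitive (hf : ∀ t, S < t → IntegrableOn f (Ioc S t)) {x : ℝ}
    (hx : S ≤ x) : IntervalIntegrable (fun t => ∫ s in S..t, f s) volume S x :=
  ContinuousOn.intervalIntegrable <|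
    (continuousOn_primitive_Ici hf).mono (by simp [uIcc_of_le hx, Icc_subset_Ici_self])

theorem hasDerivAt_primitive_primitive (hf : ∀ t, S < t → IntegrableOn f (Ioc S t)) {x : ℝ}
    (hx : S < x) :
    HasDerivAt (fun t => ∫ s in S..t, ∫ r in S..s, f r) (∫ s in S..x, f s) x := by
  have hcont := continuousOn_primitive_Ici hf
  exact intervalIntegral.integral_hasDerivAt_right (intervalIntegrable_primitive hf hx.le)
    (hcont.mono Ioi_subset_Ici_self |>.stronglyMeasurableAtFilter isOpen_Ioi x hx)
    (hcont.continuousAt (Ici_mem_nhds hx))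

theorem integral_primitive_mul_lt_sq (hf : ∀ t, S < t → IntegrableOn f (Ioc S t))
    (hanti : AntitoneOn f (Ioi S)) {t : ℝ} (ht : S < t) (hft : 0 < f t) :
    (∫ s in S..t, ∫ r in S..s, f r) * f t < (∫ s in S..t, f s) ^ 2 := by
  set I := fun x => ∫ s in S..x, f s with hI
  have hii : ∀ {x y}, S ≤ x → S ≤ y → IntervalIntegrable f volume x y :=
    intervalIntegrable_of_forall_integrableOn_Ioc hf
  have hgap : ∀ x ∈ Ico S t, (t - x) * f t ≤ I t - I x := fun x hx => by
    rw [hI, intervalIntegral.integral_interval_sub_left (hii le_rfl ht.le) (hii le_rfl hx.1)]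
    exact mul_le_intervalIntegral_of_antitoneOn hx.2.le
      (hanti.mono (Ioc_subset_Ioi_self.trans (Ioi_subset_Ioi hx.1))) (hii hx.1 ht.le)
  have hIint : IntervalIntegrable I volume S t := intervalIntegrable_primitive hf ht.le
  have hJ : ∫ s in S..t, I s < (t - S) * I t := by
    have hpos : 0 < ∫ x in S..t, (I t - I x) :=
      intervalIntegral.intervalIntegral_pos_of_pos_on (intervalIntegrable_const.sub hIint)
        (fun x hx => (mul_pos (sub_pos.2 hx.2) hft).trans_le (hgap x ⟨hx.1.le, hx.2⟩)) ht
    rw [intervalIntegral.integral_sub intervalIntegrable_const hIint,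
      intervalIntegral.integral_const, smul_eq_mul] at hpos
    linarith
  have hIt : (t - S) * f t ≤ I t := by simpa [hI] using hgap S ⟨le_rfl, ht⟩
  nlinarith [mul_pos (sub_pos.2 ht) hft]

end Primitive

theorem add_sq_div_eq_neg_one_div {s s1 u1 s2 u2 : ℝ} (h1 : s1 - s * u1 = 1)
    (h2 : s2 = s1 * u1 + s * u2) (hu1 : u1 ≠ 0) :
    s + s1 ^ 2 / (u2 * s - s2) = -1 / u1 := by
  have hden : u2 * s - s2 = -(s1 * u1) := by rw [h2]; ring
  rw [hden]
  field_simp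
  linear_combination -h1

theorem stmt_5_general (S : ℝ) (c : ℝ → ℝ)
    (hc_pos : ∀ t, S < t → 0 < c t)
    (hc_dec : AntitoneOn (fun t => c t * Real.exp (-t)) (Set.Ioi S))
    (I u sf : ℝ → ℝ)
    (hI : ∀ t, I t = ∫ s in S..t, c s * Real.exp (-s))
    (hI_int : ∀ t, S < t → IntegrableOn (fun s => c s * Real.exp (-s)) (Set.Ioc S t))
    (hI_pos : ∀ t, S < t → 0 < I t)
    (hu : ∀ t, u t = -Real.log (I t))
    (hsf : ∀ t, sf t = (∫ s in S..t, I s) / I t) :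
    ∀ t, S < t → ContinuousAt c t →
      (0 < sf t) ∧
      (∀ s1 : ℝ, HasDerivAt sf s1 t → 0 < s1) ∧
      (∀ s1 u1 : ℝ, HasDerivAt sf s1 t → HasDerivAt u u1 t → s1 - sf t * u1 = 1) ∧
      (∀ s1 u1 s2 u2 : ℝ, HasDerivAt sf s1 t → HasDerivAt u u1 t →
        HasDerivAt (deriv sf) s2 t → HasDerivAt (deriv u) u2 t →
        (sf t + s1 ^ 2 / (u2 * sf t - s2)) * Real.exp (u t - t) = 1 / c t) := by
  intro t ht hct
  set f := fun s => c s * Real.exp (-s) with hf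
  have hI' : I = fun t => ∫ s in S..t, f s := funext hI
  have hderiv : ∀ x, S < x → ContinuousAt f x →
      HasDerivAt u (-(f x / I x)) x ∧ HasDerivAt sf (1 + sf x * -(f x / I x)) x := by
    intro x hx hfx
    rw [hsf x, funext hu, funext hsf]
    subst hI'
    exact hasDerivAt_neg_log_and_div (hasDerivAt_primitive hI_int hx hfx)
      (hasDerivAt_primitive_primitive hI_int hx) (hI_pos x hx).ne'
  obtain ⟨hu1, hs1⟩ := hderiv t ht (by fun_prop)
  have hIt := hI_pos t ht
  have hft : 0 < f t := mul_pos (hc_pos t ht) (Real.exp_pos _)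
  have hs1_pos : 0 < 1 + sf t * -(f t / I t) := by
    have key := integral_primitive_mul_lt_sq hI_int hc_dec ht hft
    simp only [← hI] at key
    rw [hsf t]
    field_simp
    linarith
  refine ⟨?_, fun s1 hs1' => hs1'.unique hs1 ▸ hs1_pos,
    fun s1 u1 hs1' hu1' => by rw [hs1'.unique hs1, hu1'.unique hu1]; ring, ?_⟩
  · rw [hsf t]
    exact div_pos (intervalIntegral.intervalIntegral_pos_of_pos_on
      (hI' ▸ intervalIntegrable_primitive hI_int ht.le) (fun x hx => hI_pos x hx.1) ht) hIt
  intro s1 u1 s2 u2 hs1' hu1' hs2 hu2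
  obtain rfl := hs1'.unique hs1
  obtain rfl := hu1'.unique hu1
  have hs2' := eq_mul_add_mul_of_deriv_eq_off_discontinuities hc_dec ht (by fun_prop)
    (fun x hx hfx => by rw [(hderiv x hx hfx).2.deriv, (hderiv x hx hfx).1.deriv])
    hs1 hu1 hs2 hu2
  rw [add_sq_div_eq_neg_one_div (by ring) hs2' (neg_lt_zero.2 (div_pos hft hIt)).ne, hu t,
    Real.exp_sub, Real.exp_neg, Real.exp_log hIt]
  have hct_ne := (hc_pos t ht).ne'
  simp only [hf, Real.exp_neg]
  field_simp

/-- Solution of the ODE system: with `I t = ∫_S^t c(s)e^{-s} ds`,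
`u t = -log (I t)` and `sf t = (∫_S^t I(t₂) dt₂) / I t`, at every `t > S` where `c` is
continuous one has `sf t > 0`, `sf' t > 0`, `sf' t - sf t · u' t = 1`, and
`(sf + sf'²/(u'' · sf - sf'')) e^{u - t} = 1 / c` (whenever the derivatives exist). -/
theorem stmt_5 (S : ℝ) (c : ℝ → ℝ)
    (hc_meas : Measurable c)
    (hc_pos : ∀ t, S < t → 0 < c t)
    (hc_dec : AntitoneOn (fun t => c t * Real.exp (-t)) (Set.Ioi S))
    (I u sf : ℝ → ℝ)
    (hI : ∀ t, I t = ∫ s in S..t, c s * Real.exp (-s))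
    (hI_int : ∀ t, S < t → IntegrableOn (fun s => c s * Real.exp (-s)) (Set.Ioc S t))
    (hI_pos : ∀ t, S < t → 0 < I t)
    (hu : ∀ t, u t = -Real.log (I t))
    (hsf : ∀ t, sf t = (∫ s in S..t, I s) / I t) :
    ∀ t, S < t → ContinuousAt c t →
      (0 < sf t) ∧
      (∀ s1 : ℝ, HasDerivAt sf s1 t → 0 < s1) ∧
      (∀ s1 u1 : ℝ, HasDerivAt sf s1 t → HasDerivAt u u1 t → s1 - sf t * u1 = 1) ∧
      (∀ s1 u1 s2 u2 : ℝ, HasDerivAt sf s1 t → HasDerivAt u u1 t →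
        HasDerivAt (deriv sf) s2 t → HasDerivAt (deriv u) u2 t →
        (sf t + s1 ^ 2 / (u2 * sf t - s2)) * Real.exp (u t - t) = 1 / c t) :=
  stmt_5_general S c hc_pos hc_dec I u sf hI hI_int hI_pos hu hsf
end
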